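/- arXiv:1504.02731 — 5 statements merged into one kernel-verified Lean document; each statement's English description precedes it below -/
import Mathlib

section
/- Let f ∈ L¹(ℝ) ∩ L²(ℝ). Let (σ_n) be a sequence of positive real numbers with σ_n → ∞ and let (h_n) be a sequence of real numbers such that h_n/σ_n → r for some r ∈ ℝ. Then σ_n · E[f(h_n + σ_n Z)] converges to (e^{−r²/2}/√(2π)) · ∫_ℝ f(x) dx as n → ∞. -/
open MeasureTheory Filter Topology

/-- Standard Gaussian density. -/
noncomputable def stdGauss (z : ℝ) : ℝ := Real.exp (-z ^ 2 / 2) / Real.sqrt (2 * Real.pi)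

/-- Gaussian expectation `E[f(h + σ Z)]` for a standard Gaussian `Z`. -/
noncomputable def gexp (f : ℝ → ℝ) (σ h : ℝ) : ℝ := ∫ z, f (h + σ * z) * stdGauss z

/-! Substituting `x = h + σ z` gives `σ E[f(h + σZ)] = ∫ f(x) φ((x - h)/σ) dx`, where `φ` is the
standard Gaussian density. Since `(x - h_n)/σ_n → -r` for every fixed `x` and `φ` is bounded and
continuous, dominated convergence (with dominating function `‖f‖ · sup φ`) yields the limit
`φ(-r) ∫ f`. -/

lemma continuous_stdGauss : Continuous stdGauss := by
  unfold stdGauss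
  fun_prop

lemma stdGauss_nonneg (z : ℝ) : 0 ≤ stdGauss z := by
  unfold stdGauss
  positivity

lemma stdGauss_le (z : ℝ) : stdGauss z ≤ (Real.sqrt (2 * Real.pi))⁻¹ := by
  rw [stdGauss, div_eq_mul_inv]
  refine mul_le_of_le_one_left (by positivity) (Real.exp_le_one_iff.2 ?_)
  nlinarith [sq_nonneg z]

lemma stdGauss_neg (z : ℝ) : stdGauss (-z) = stdGauss z := by
  simp [stdGauss]

lemma abs_mul_gexp {σ : ℝ} (hσ : σ ≠ 0) (f : ℝ → ℝ) (h : ℝ) :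
    |σ| * gexp f σ h = ∫ x, f x * stdGauss ((x - h) / σ) := by
  set F : ℝ → ℝ := fun x => f x * stdGauss ((x - h) / σ)
  have hF : ∀ z, f (h + σ * z) * stdGauss z = F (h + σ * z) := fun z => by
    simp only [F, add_sub_cancel_left, mul_div_cancel_left₀ z hσ]
  calc |σ| * gexp f σ h = |σ| * ∫ z, F (h + σ * z) := by simp only [gexp, hF]
    _ = |σ| * (|σ⁻¹| * ∫ y, F (h + y)) := by
        rw [Measure.integral_comp_mul_left (fun y => F (h + y)) σ, smul_eq_mul]
    _ = ∫ x, F x := by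
        rw [integral_add_left_eq_self F h, abs_inv, ← mul_assoc,
          mul_inv_cancel₀ (abs_ne_zero.2 hσ), one_mul]

lemma tendsto_integral_mul_of_tendsto {α ι : Type*} [MeasurableSpace α] {μ : Measure α}
    {l : Filter ι} [l.IsCountablyGenerated] {f : α → ℝ} (hf : Integrable f μ) {g : ι → α → ℝ}
    {C c : ℝ} (hg_meas : ∀ i, AEStronglyMeasurable (g i) μ) (hg_bound : ∀ i x, ‖g i x‖ ≤ C)
    (hg : ∀ x, Tendsto (fun i => g i x) l (𝓝 c)) :
    Tendsto (fun i => ∫ x, f x * g i x ∂μ) l (𝓝 ((∫ x, f x ∂μ) * c)) := by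
  rw [← integral_mul_const]
  refine tendsto_integral_filter_of_dominated_convergence (fun x => ‖f x‖ * C)
    (.of_forall fun i => hf.aestronglyMeasurable.mul (hg_meas i)) (.of_forall fun i => ?_)
    (hf.norm.mul_const C) (.of_forall fun x => (hg x).const_mul (f x))
  refine .of_forall fun x => ?_
  rw [norm_mul]
  exact mul_le_mul_of_nonneg_left (hg_bound i x) (norm_nonneg _)

lemma tendsto_sub_div_of_tendsto_div {ι : Type*} {l : Filter ι} {σ h : ι → ℝ} {r : ℝ}
    (hσ : Tendsto σ l atTop) (hr : Tendsto (fun i => h i / σ i) l (𝓝 r)) (x : ℝ) :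
    Tendsto (fun i => (x - h i) / σ i) l (𝓝 (-r)) := by
  simpa only [sub_div, zero_sub] using (tendsto_const_nhds.div_atTop hσ).sub hr

theorem stmt_0_general (f : ℝ → ℝ) (hf1 : Integrable f)
    (σ : ℕ → ℝ) (hσ : Tendsto σ atTop atTop)
    (h : ℕ → ℝ) (r : ℝ) (hr : Tendsto (fun n => h n / σ n) atTop (nhds r)) :
    Tendsto (fun n => σ n * gexp f (σ n) (h n)) atTop
      (nhds (Real.exp (-r ^ 2 / 2) / Real.sqrt (2 * Real.pi) * ∫ x, f x)) := by
  have hsubst : (fun n => ∫ x, f x * stdGauss ((x - h n) / σ n)) =ᶠ[atTop]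
      fun n => σ n * gexp f (σ n) (h n) := by
    filter_upwards [hσ.eventually_gt_atTop 0] with n hn
    rw [← abs_mul_gexp hn.ne', abs_of_pos hn]
  have hlim : Tendsto (fun n => ∫ x, f x * stdGauss ((x - h n) / σ n)) atTop
      (𝓝 ((∫ x, f x) * stdGauss (-r))) :=
    tendsto_integral_mul_of_tendsto hf1
      (fun _ => (continuous_stdGauss.comp (by fun_prop)).aestronglyMeasurable)
      (fun _ x => by rw [Real.norm_of_nonneg (stdGauss_nonneg _)]; exact stdGauss_le _)
      (fun x => continuous_stdGauss.continuousAt.tendsto.comp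
        (tendsto_sub_div_of_tendsto_div hσ hr x))
  rw [mul_comm, stdGauss_neg] at hlim
  exact hlim.congr' hsubst

theorem stmt_0 (f : ℝ → ℝ) (hf1 : Integrable f) (hf2 : MemLp f 2 (volume : Measure ℝ))
    (σ : ℕ → ℝ) (hσpos : ∀ n, 0 < σ n) (hσ : Tendsto σ atTop atTop)
    (h : ℕ → ℝ) (r : ℝ) (hr : Tendsto (fun n => h n / σ n) atTop (nhds r)) :
    Tendsto (fun n => σ n * gexp f (σ n) (h n)) atTop
      (nhds (Real.exp (-r ^ 2 / 2) / Real.sqrt (2 * Real.pi) * ∫ x, f x)) :=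
  stmt_0_general f hf1 σ hσ h r hr
end

section
/- Let w₁ = (−1,1)/√2 and w₂ = (1,1)/√2, let v₁, v₂ be an orthonormal basis of ℝ², let λ₁ ≥ 0, ν ≥ 0, m₁ ∈ ℝ, c₂ > 0, and set c = max{√2/c₂, 2/c₂²}. Define the linear maps A = λ₁^{1/2} v₁⊗e₁ + v₂⊗e₂ and A_∞ = ν^{1/2} w₁⊗e₁ + w₂⊗e₂, and the measures μ₁ = γ(dy₁) ⊗ dy₂ and μ₂ = γ(dy₁) ⊗ |y₂| dy₂ on ℝ², where γ is the standard Gaussian measure on ℝ. For M ≥ 1 let K = [−M, M]². Then for i = 1, 2: ∫_{ℝ²∖K} ( e^{−c₂‖A y + m₁ v₁‖₂} + e^{−c₂‖A_∞ y‖₂} ) dμ_i(y) ≤ 4 [ c e^{−M/c}(M + 1) + c e^{−M²/2} ]. -/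
open MeasureTheory Filter

/-- Euclidean norm on `ℝ × ℝ`. -/
noncomputable def enorm2 (p : ℝ × ℝ) : ℝ := Real.sqrt (p.1 ^ 2 + p.2 ^ 2)

/-- Euclidean inner product on `ℝ × ℝ`. -/
def dot (p q : ℝ × ℝ) : ℝ := p.1 * q.1 + p.2 * q.2

/-!
Both linear maps send `y` to `a • u + y₂ • v` for an orthonormal pair `(u, v)` (for `A y + m₁ v₁`
take `a = λ₁^{1/2} y₁ + m₁`), so the integrand is at most `2 exp (-c₂ |y₂|)`, a function of `y₂`
alone. Covering `Kᶜ` by `{|y₁| > M} ∪ {|y₂| > M}`, the integral is at most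
`γ(|y₁| > M) · ∫ 2 e^{-c₂|t|} dν + ∫_{|t| > M} 2 e^{-c₂|t|} dν`, where `ν` is `dt` or `|t| dt`.
For `M ≥ 1` the Gaussian tail is at most `e^{-M²/2}` (bound the density by `x e^{-x²/2} / 2`),
the Laplace-type integrals are explicit, and `c ≥ 1/c₂`, `c ≥ 1/c₂²` (hence `e^{-c₂ M} ≤ e^{-M/c}`)
absorb the constants.
-/

open Set Real ENNReal ProbabilityTheory Topology

lemma enorm2_smul_add_smul {u v : ℝ × ℝ} (hu : dot u u = 1) (hv : dot v v = 1)
    (huv : dot u v = 0) (a b : ℝ) : enorm2 (a • u + b • v) = √(a ^ 2 + b ^ 2) := by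
  simp only [dot] at hu hv huv
  simp only [enorm2, Prod.fst_add, Prod.snd_add, Prod.smul_fst, Prod.smul_snd, smul_eq_mul]
  congr 1
  linear_combination a ^ 2 * hu + b ^ 2 * hv + 2 * a * b * huv

lemma exp_neg_mul_enorm2_smul_add_smul_le {u v : ℝ × ℝ} (hu : dot u u = 1) (hv : dot v v = 1)
    (huv : dot u v = 0) {c : ℝ} (hc : 0 ≤ c) (a b : ℝ) :
    exp (-c * enorm2 (a • u + b • v)) ≤ exp (-(c * |b|)) := by
  have hb : |b| ≤ enorm2 (a • u + b • v) := by
    rw [enorm2_smul_add_smul hu hv huv]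
    exact Real.abs_le_sqrt (by nlinarith [sq_nonneg a])
  rw [exp_le_exp, neg_mul, neg_le_neg_iff]
  exact mul_le_mul_of_nonneg_left hb hc

lemma lintegral_Ioi_ofReal_deriv {g g' : ℝ → ℝ} {a : ℝ}
    (hderiv : ∀ x ∈ Ici a, HasDerivAt g (g' x) x) (hg' : ∀ x ∈ Ioi a, 0 ≤ g' x)
    (hg : Tendsto g atTop (𝓝 0)) :
    ∫⁻ x in Ioi a, ENNReal.ofReal (g' x) = ENNReal.ofReal (-g a) := by
  rw [← ofReal_integral_eq_lintegral_ofReal (integrableOn_Ioi_deriv_of_nonneg' hderiv hg' hg)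
    ((ae_restrict_iff' measurableSet_Ioi).2 (.of_forall hg')),
    integral_Ioi_of_hasDerivAt_of_nonneg' hderiv hg' hg, zero_sub]

lemma setLIntegral_compl_Icc_le_of_even {f : ℝ → ℝ≥0∞} (hf : ∀ x, f (-x) = f x) (M : ℝ) :
    ∫⁻ x in (Icc (-M) M)ᶜ, f x ≤ 2 * ∫⁻ x in Ioi M, f x := by
  have hIio : ∫⁻ x in Iio (-M), f x = ∫⁻ x in Ioi M, f x := by
    have := (Measure.measurePreserving_neg (volume : Measure ℝ)).setLIntegral_comp_preimage_emb
      (Homeomorph.neg ℝ).measurableEmbedding f (Ioi M)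
    simpa [hf] using this
  calc ∫⁻ x in (Icc (-M) M)ᶜ, f x = ∫⁻ x in Iio (-M) ∪ Ioi M, f x := by
        congr 2
        ext x
        simp only [mem_compl_iff, mem_Icc, not_and_or, not_le, mem_union, mem_Iio, mem_Ioi]
    _ ≤ (∫⁻ x in Iio (-M), f x) + ∫⁻ x in Ioi M, f x := lintegral_union_le _ _ _
    _ = 2 * ∫⁻ x in Ioi M, f x := by rw [hIio, two_mul]

lemma tendsto_exp_neg_mul_atTop {c : ℝ} (hc : 0 < c) :
    Tendsto (fun x => exp (-(c * x))) atTop (𝓝 0) :=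
  tendsto_exp_neg_atTop_nhds_zero.comp (tendsto_id.const_mul_atTop hc)

lemma tendsto_mul_exp_neg_mul_atTop {c : ℝ} (hc : 0 < c) :
    Tendsto (fun x => x * exp (-(c * x))) atTop (𝓝 0) := by
  have := ((tendsto_pow_mul_exp_neg_atTop_nhds_zero 1).comp
    (tendsto_id.const_mul_atTop hc)).div_const c
  rw [zero_div] at this
  refine this.congr fun x => ?_
  simp only [Function.comp_apply, id_eq, pow_one]
  field_simp

lemma hasDerivAt_neg_mul (c x : ℝ) : HasDerivAt (fun x => -(c * x)) (-c) x := by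
  simpa using (hasDerivAt_id' x).const_mul (-c)

lemma lintegral_Ioi_exp_neg_mul {c : ℝ} (hc : 0 < c) (a : ℝ) :
    ∫⁻ x in Ioi a, ENNReal.ofReal (exp (-(c * x))) = ENNReal.ofReal (exp (-(c * a)) / c) := by
  have hderiv : ∀ x ∈ Ici a, HasDerivAt (fun x => -exp (-(c * x)) / c) (exp (-(c * x))) x :=
    fun x _ => ((hasDerivAt_neg_mul c x).exp.neg.div_const c).congr_deriv (by field_simp)
  rw [lintegral_Ioi_ofReal_deriv hderiv (fun x _ => (exp_pos _).le)
    (by simpa using (tendsto_exp_neg_mul_atTop hc).neg.div_const c), neg_div, neg_neg]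

lemma lintegral_Ioi_mul_exp_neg_mul {c : ℝ} (hc : 0 < c) {a : ℝ} (ha : 0 ≤ a) :
    ∫⁻ x in Ioi a, ENNReal.ofReal (x * exp (-(c * x))) =
      ENNReal.ofReal (exp (-(c * a)) * (a / c + 1 / c ^ 2)) := by
  have hderiv : ∀ x ∈ Ici a, HasDerivAt (fun x => -(exp (-(c * x)) * (x / c + 1 / c ^ 2)))
      (x * exp (-(c * x))) x := fun x _ =>
    ((hasDerivAt_neg_mul c x).exp.mul (((hasDerivAt_id' x).div_const c).add_const _)).neg
      |>.congr_deriv (by field_simp; ring)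
  have hlim : Tendsto (fun x => -(exp (-(c * x)) * (x / c + 1 / c ^ 2))) atTop (𝓝 0) := by
    have := (((tendsto_mul_exp_neg_mul_atTop hc).div_const c).add
      ((tendsto_exp_neg_mul_atTop hc).mul_const (1 / c ^ 2))).neg
    simp only [zero_div, zero_mul, add_zero, neg_zero] at this
    exact this.congr fun x => by ring
  rw [lintegral_Ioi_ofReal_deriv hderiv (fun x hx => by have := ha.trans hx.le; positivity) hlim,
    neg_neg]

lemma setLIntegral_compl_Icc_exp_neg_mul_abs_le {c : ℝ} (hc : 0 < c) {M : ℝ} (hM : 0 ≤ M) :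
    ∫⁻ x in (Icc (-M) M)ᶜ, ENNReal.ofReal (exp (-(c * |x|))) ≤
      ENNReal.ofReal (2 * exp (-(c * M)) / c) := by
  refine (setLIntegral_compl_Icc_le_of_even (fun x => by rw [abs_neg]) M).trans (le_of_eq ?_)
  rw [setLIntegral_congr_fun measurableSet_Ioi (fun x hx => by rw [abs_of_pos (hM.trans_lt hx)]),
    lintegral_Ioi_exp_neg_mul hc, ← ENNReal.ofReal_ofNat 2, ← ENNReal.ofReal_mul zero_le_two,
    mul_div_assoc]

lemma setLIntegral_compl_Icc_abs_mul_exp_neg_mul_abs_le {c : ℝ} (hc : 0 < c) {M : ℝ}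
    (hM : 0 ≤ M) :
    ∫⁻ x in (Icc (-M) M)ᶜ, ENNReal.ofReal (|x| * exp (-(c * |x|))) ≤
      ENNReal.ofReal (2 * exp (-(c * M)) * (M / c + 1 / c ^ 2)) := by
  refine (setLIntegral_compl_Icc_le_of_even (fun x => by rw [abs_neg]) M).trans (le_of_eq ?_)
  rw [setLIntegral_congr_fun measurableSet_Ioi (fun x hx => by rw [abs_of_pos (hM.trans_lt hx)]),
    lintegral_Ioi_mul_exp_neg_mul hc hM, ← ENNReal.ofReal_ofNat 2,
    ← ENNReal.ofReal_mul zero_le_two, mul_assoc]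

lemma lintegral_exp_neg_mul_abs_le {c : ℝ} (hc : 0 < c) :
    ∫⁻ x, ENNReal.ofReal (exp (-(c * |x|))) ≤ ENNReal.ofReal (2 / c) := by
  have := setLIntegral_compl_Icc_exp_neg_mul_abs_le hc le_rfl
  rwa [neg_zero, Icc_self, restrict_compl_singleton, mul_zero, neg_zero, exp_zero,
    mul_one] at this

lemma lintegral_abs_mul_exp_neg_mul_abs_le {c : ℝ} (hc : 0 < c) :
    ∫⁻ x, ENNReal.ofReal (|x| * exp (-(c * |x|))) ≤ ENNReal.ofReal (2 / c ^ 2) := by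
  have := setLIntegral_compl_Icc_abs_mul_exp_neg_mul_abs_le hc le_rfl
  rwa [neg_zero, Icc_self, restrict_compl_singleton, mul_zero, neg_zero, exp_zero, mul_one,
    zero_div, zero_add, mul_one_div] at this

lemma gaussianPDF_le_of_one_le {x : ℝ} (hx : 1 ≤ x) :
    gaussianPDF 0 1 x ≤ ENNReal.ofReal (x * exp (-x ^ 2 / 2) / 2) := by
  have hpi : 2 ≤ √(2 * π) := by
    rw [Real.le_sqrt zero_le_two (by positivity)]
    nlinarith [pi_gt_three]
  rw [gaussianPDF, gaussianPDFReal]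
  refine ENNReal.ofReal_le_ofReal ?_
  simp only [NNReal.coe_one, mul_one, sub_zero]
  have hE := (exp_pos (-x ^ 2 / 2)).le
  calc (√(2 * π))⁻¹ * exp (-x ^ 2 / 2) ≤ 2⁻¹ * exp (-x ^ 2 / 2) := by
        gcongr
    _ ≤ x * exp (-x ^ 2 / 2) / 2 := by nlinarith

lemma gaussianReal_compl_Icc_le {M : ℝ} (hM : 1 ≤ M) :
    gaussianReal 0 1 (Icc (-M) M)ᶜ ≤ ENNReal.ofReal (exp (-M ^ 2 / 2)) := by
  have hderiv : ∀ x ∈ Ici M, HasDerivAt (fun x => -exp (-x ^ 2 / 2) / 2)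
      (x * exp (-x ^ 2 / 2) / 2) x := fun x _ =>
    (((hasDerivAt_pow 2 x).fun_neg.div_const 2).exp.neg.div_const 2).congr_deriv (by ring)
  have hlim : Tendsto (fun x => -exp (-x ^ 2 / 2) / 2) atTop (𝓝 0) := by
    have := tendsto_exp_neg_atTop_nhds_zero.comp
      ((tendsto_pow_atTop two_ne_zero).atTop_div_const two_pos)
    simpa [neg_div] using this.neg.div_const 2
  rw [gaussianReal_apply 0 one_ne_zero]
  calc ∫⁻ x in (Icc (-M) M)ᶜ, gaussianPDF 0 1 x
      ≤ 2 * ∫⁻ x in Ioi M, gaussianPDF 0 1 x :=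
        setLIntegral_compl_Icc_le_of_even (fun x => by simp [gaussianPDF, gaussianPDFReal]) M
    _ ≤ 2 * ∫⁻ x in Ioi M, ENNReal.ofReal (x * exp (-x ^ 2 / 2) / 2) := by
        gcongr 1
        exact setLIntegral_mono' measurableSet_Ioi fun x hx =>
          gaussianPDF_le_of_one_le (hM.trans (le_of_lt hx))
    _ = ENNReal.ofReal (exp (-M ^ 2 / 2)) := by
        rw [lintegral_Ioi_ofReal_deriv hderiv (fun x hx => by have := hM.trans hx.le; positivity)
          hlim, ← ENNReal.ofReal_ofNat 2, ← ENNReal.ofReal_mul zero_le_two]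
        ring_nf

lemma setLIntegral_compl_prod_snd_le {α β : Type*} [MeasurableSpace α] [MeasurableSpace β]
    (μ : Measure α) (ν : Measure β) [IsProbabilityMeasure μ] [SFinite ν] (s : Set α) (t : Set β)
    {g : β → ℝ≥0∞} (hg : Measurable g) :
    ∫⁻ p in (s ×ˢ t)ᶜ, g p.2 ∂μ.prod ν ≤ μ sᶜ * ∫⁻ y, g y ∂ν + ∫⁻ y in tᶜ, g y ∂ν := by
  have hprod (s : Set α) (t : Set β) :
      ∫⁻ p in s ×ˢ t, g p.2 ∂μ.prod ν = μ s * ∫⁻ y in t, g y ∂ν := by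
    rw [← Measure.prod_restrict, lintegral_prod (fun p => g p.2) (by fun_prop)]
    simp [mul_comm]
  calc ∫⁻ p in (s ×ˢ t)ᶜ, g p.2 ∂μ.prod ν
      = ∫⁻ p in sᶜ ×ˢ univ ∪ univ ×ˢ tᶜ, g p.2 ∂μ.prod ν := by rw [compl_prod_eq_union]
    _ ≤ (∫⁻ p in sᶜ ×ˢ univ, g p.2 ∂μ.prod ν) + ∫⁻ p in univ ×ˢ tᶜ, g p.2 ∂μ.prod ν :=
        lintegral_union_le _ _ _
    _ = μ sᶜ * ∫⁻ y, g y ∂ν + ∫⁻ y in tᶜ, g y ∂ν := by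
        rw [hprod, hprod, Measure.restrict_univ, measure_univ, one_mul]

lemma setIntegral_compl_Icc_prod_gaussianReal_le {ν : Measure ℝ} [SFinite ν] {f : ℝ × ℝ → ℝ}
    {g : ℝ → ℝ} (hg : Measurable g) {C M L T : ℝ} (hC : 0 ≤ C) (hL : 0 ≤ L) (hT : 0 ≤ T)
    (hM : 1 ≤ M) (hfg : ∀ y, |f y| ≤ C * g y.2)
    (hgL : ∫⁻ t, ENNReal.ofReal (g t) ∂ν ≤ ENNReal.ofReal L)
    (hgT : ∫⁻ t in (Icc (-M) M)ᶜ, ENNReal.ofReal (g t) ∂ν ≤ ENNReal.ofReal T) :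
    ∫ y in (Icc (-M) M ×ˢ Icc (-M) M)ᶜ, f y ∂(gaussianReal 0 1).prod ν ≤
      C * (exp (-M ^ 2 / 2) * L + T) := by
  have hlint : ∫⁻ y in (Icc (-M) M ×ˢ Icc (-M) M)ᶜ, ENNReal.ofReal ‖f y‖
      ∂(gaussianReal 0 1).prod ν ≤ ENNReal.ofReal (C * (exp (-M ^ 2 / 2) * L + T)) :=
    calc _ ≤ ∫⁻ y in (Icc (-M) M ×ˢ Icc (-M) M)ᶜ, ENNReal.ofReal C * ENNReal.ofReal (g y.2)
            ∂(gaussianReal 0 1).prod ν := lintegral_mono fun y => by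
          rw [← ENNReal.ofReal_mul hC, Real.norm_eq_abs]
          exact ENNReal.ofReal_le_ofReal (hfg y)
      _ = ENNReal.ofReal C * ∫⁻ y in (Icc (-M) M ×ˢ Icc (-M) M)ᶜ, ENNReal.ofReal (g y.2)
            ∂(gaussianReal 0 1).prod ν := lintegral_const_mul _ (by fun_prop)
      _ ≤ ENNReal.ofReal C * (gaussianReal 0 1 (Icc (-M) M)ᶜ * ∫⁻ t, ENNReal.ofReal (g t) ∂ν
            + ∫⁻ t in (Icc (-M) M)ᶜ, ENNReal.ofReal (g t) ∂ν) := by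
          gcongr
          exact setLIntegral_compl_prod_snd_le _ _ _ _ (by fun_prop)
      _ ≤ ENNReal.ofReal C * (ENNReal.ofReal (exp (-M ^ 2 / 2)) * ENNReal.ofReal L
            + ENNReal.ofReal T) := by
          gcongr
          exact gaussianReal_compl_Icc_le hM
      _ = ENNReal.ofReal (C * (exp (-M ^ 2 / 2) * L + T)) := by
          rw [← ENNReal.ofReal_mul (exp_pos _).le, ← ENNReal.ofReal_add (by positivity) hT,
            ← ENNReal.ofReal_mul hC]
  calc _ ≤ ‖∫ y in (Icc (-M) M ×ˢ Icc (-M) M)ᶜ, f y ∂(gaussianReal 0 1).prod ν‖ :=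
        Real.le_norm_self _
    _ ≤ _ := norm_integral_le_lintegral_norm _
    _ ≤ _ := ENNReal.toReal_le_of_le_ofReal (by positivity) hlint

lemma setLIntegral_withDensity_ofReal_abs {g : ℝ → ℝ} (hg : Measurable g) {s : Set ℝ}
    (hs : MeasurableSet s) :
    ∫⁻ x in s, ENNReal.ofReal (g x) ∂volume.withDensity (fun y => ENNReal.ofReal |y|) =
      ∫⁻ x in s, ENNReal.ofReal (|x| * g x) := by
  rw [restrict_withDensity hs, lintegral_withDensity_eq_lintegral_mul _ (by fun_prop)
    (by fun_prop)]
  simp_rw [Pi.mul_apply, ENNReal.ofReal_mul (abs_nonneg _)]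

noncomputable def tailConst (c₂ : ℝ) : ℝ := max (√2 / c₂) (2 / c₂ ^ 2)

lemma one_div_le_tailConst {c₂ : ℝ} (hc₂ : 0 < c₂) : 1 / c₂ ≤ tailConst c₂ :=
  le_max_of_le_left (by gcongr; exact one_le_sqrt.2 one_le_two)

lemma one_div_sq_le_tailConst {c₂ : ℝ} (hc₂ : 0 < c₂) : 1 / c₂ ^ 2 ≤ tailConst c₂ :=
  le_max_of_le_right (by gcongr; exact one_le_two)

lemma exp_neg_mul_le_exp_neg_div_tailConst {c₂ : ℝ} (hc₂ : 0 < c₂) {M : ℝ} (hM : 0 ≤ M) :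
    exp (-(c₂ * M)) ≤ exp (-M / tailConst c₂) := by
  have hc := one_div_le_tailConst hc₂
  rw [exp_le_exp, neg_div, neg_le_neg_iff, div_le_iff₀ ((one_div_pos.2 hc₂).trans_le hc)]
  rw [div_le_iff₀ hc₂] at hc
  nlinarith

lemma setIntegral_compl_Icc_prod_volume_le {c₂ M : ℝ} (hc₂ : 0 < c₂) (hM : 1 ≤ M)
    {f : ℝ × ℝ → ℝ} (hf : ∀ y, |f y| ≤ 2 * exp (-(c₂ * |y.2|))) :
    ∫ y in (Icc (-M) M ×ˢ Icc (-M) M)ᶜ, f y ∂(gaussianReal 0 1).prod volume ≤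
      4 * (tailConst c₂ * exp (-M / tailConst c₂) * (M + 1)
        + tailConst c₂ * exp (-M ^ 2 / 2)) := by
  have hM0 : 0 ≤ M := zero_le_one.trans hM
  have hc := one_div_le_tailConst hc₂
  refine (setIntegral_compl_Icc_prod_gaussianReal_le (g := fun t => exp (-(c₂ * |t|)))
    (by fun_prop) zero_le_two (by positivity) (by positivity) hM hf
    (lintegral_exp_neg_mul_abs_le hc₂) (setLIntegral_compl_Icc_exp_neg_mul_abs_le hc₂ hM0)).trans ?_
  linear_combination 4 * mul_le_mul_of_nonneg_left hc (exp_pos (-M ^ 2 / 2)).le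
    + 4 * mul_le_mul (exp_neg_mul_le_exp_neg_div_tailConst hc₂ hM0) hc (by positivity)
      (exp_pos _).le
    + 4 * mul_nonneg (mul_nonneg (exp_pos (-M / tailConst c₂)).le
      ((one_div_pos.2 hc₂).le.trans hc)) hM0

lemma setIntegral_compl_Icc_prod_withDensity_abs_le {c₂ M : ℝ} (hc₂ : 0 < c₂) (hM : 1 ≤ M)
    {f : ℝ × ℝ → ℝ} (hf : ∀ y, |f y| ≤ 2 * exp (-(c₂ * |y.2|))) :
    ∫ y in (Icc (-M) M ×ˢ Icc (-M) M)ᶜ, f y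
        ∂(gaussianReal 0 1).prod (volume.withDensity fun y => ENNReal.ofReal |y|) ≤
      4 * (tailConst c₂ * exp (-M / tailConst c₂) * (M + 1)
        + tailConst c₂ * exp (-M ^ 2 / 2)) := by
  have hM0 : 0 ≤ M := zero_le_one.trans hM
  have hc := one_div_le_tailConst hc₂
  have hsum : M / c₂ + 1 / c₂ ^ 2 ≤ tailConst c₂ * (M + 1) := by
    linear_combination mul_le_mul_of_nonneg_left hc hM0 + one_div_sq_le_tailConst hc₂
  refine (setIntegral_compl_Icc_prod_gaussianReal_le (g := fun t => exp (-(c₂ * |t|)))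
    (L := 2 / c₂ ^ 2) (T := 2 * exp (-(c₂ * M)) * (M / c₂ + 1 / c₂ ^ 2)) (by fun_prop)
    zero_le_two (by positivity) (by positivity) hM hf ?_ ?_).trans ?_
  · simpa using (setLIntegral_withDensity_ofReal_abs (by fun_prop) MeasurableSet.univ).trans_le
      (by simpa using lintegral_abs_mul_exp_neg_mul_abs_le hc₂)
  · rw [setLIntegral_withDensity_ofReal_abs (by fun_prop) measurableSet_Icc.compl]
    exact setLIntegral_compl_Icc_abs_mul_exp_neg_mul_abs_le hc₂ hM0
  linear_combination 4 * mul_le_mul_of_nonneg_left (one_div_sq_le_tailConst hc₂)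
      (exp_pos (-M ^ 2 / 2)).le
    + 4 * mul_le_mul (exp_neg_mul_le_exp_neg_div_tailConst hc₂ hM0) hsum (by positivity)
      (exp_pos _).le

theorem stmt_12_general (lam1 ν m1 c₂ : ℝ) (hc₂ : 0 < c₂)
    (v1 v2 : ℝ × ℝ) (hv : dot v1 v1 = 1 ∧ dot v2 v2 = 1 ∧ dot v1 v2 = 0)
    (M : ℝ) (hM : 1 ≤ M) :
    let w1 : ℝ × ℝ := (-1 / Real.sqrt 2, 1 / Real.sqrt 2)
    let w2 : ℝ × ℝ := (1 / Real.sqrt 2, 1 / Real.sqrt 2)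
    let c := max (Real.sqrt 2 / c₂) (2 / c₂ ^ 2)
    let μ₁ : Measure (ℝ × ℝ) := (ProbabilityTheory.gaussianReal 0 1).prod volume
    let μ₂ : Measure (ℝ × ℝ) := (ProbabilityTheory.gaussianReal 0 1).prod
      (volume.withDensity fun y => ENNReal.ofReal |y|)
    let K : Set (ℝ × ℝ) := Set.Icc (-M) M ×ˢ Set.Icc (-M) M
    -- `A y = λ₁^{1/2} y₁ v₁ + y₂ v₂` and `A_∞ y = ν^{1/2} y₁ w₁ + y₂ w₂`
    let integrand : ℝ × ℝ → ℝ := fun y =>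
      Real.exp (-c₂ * enorm2 ((Real.sqrt lam1 * y.1) • v1 + y.2 • v2 + m1 • v1)) +
      Real.exp (-c₂ * enorm2 ((Real.sqrt ν * y.1) • w1 + y.2 • w2))
    (∫ y in Kᶜ, integrand y ∂μ₁) ≤
        4 * (c * Real.exp (-M / c) * (M + 1) + c * Real.exp (-M ^ 2 / 2)) ∧
      (∫ y in Kᶜ, integrand y ∂μ₂) ≤
        4 * (c * Real.exp (-M / c) * (M + 1) + c * Real.exp (-M ^ 2 / 2)) := by
  intro w1 w2 c μ₁ μ₂ K integrand
  obtain ⟨hv11, hv22, hv12⟩ := hv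
  have hw : dot w1 w1 = 1 ∧ dot w2 w2 = 1 ∧ dot w1 w2 = 0 := by
    simp only [dot, w1, w2]; ring_nf; norm_num
  have hdom (y : ℝ × ℝ) : |integrand y| ≤ 2 * exp (-(c₂ * |y.2|)) := by
    simp only [integrand]
    rw [abs_of_pos (by positivity), two_mul, add_right_comm, ← add_smul]
    exact add_le_add
      (exp_neg_mul_enorm2_smul_add_smul_le hv11 hv22 hv12 hc₂.le _ _)
      (exp_neg_mul_enorm2_smul_add_smul_le hw.1 hw.2.1 hw.2.2 hc₂.le _ _)
  exact ⟨setIntegral_compl_Icc_prod_volume_le hc₂ hM hdom,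
    setIntegral_compl_Icc_prod_withDensity_abs_le hc₂ hM hdom⟩

theorem stmt_12 (lam1 ν m1 c₂ : ℝ) (hlam1 : 0 ≤ lam1) (hν : 0 ≤ ν) (hc₂ : 0 < c₂)
    (v1 v2 : ℝ × ℝ) (hv : dot v1 v1 = 1 ∧ dot v2 v2 = 1 ∧ dot v1 v2 = 0)
    (M : ℝ) (hM : 1 ≤ M) :
    let w1 : ℝ × ℝ := (-1 / Real.sqrt 2, 1 / Real.sqrt 2)
    let w2 : ℝ × ℝ := (1 / Real.sqrt 2, 1 / Real.sqrt 2)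
    let c := max (Real.sqrt 2 / c₂) (2 / c₂ ^ 2)
    let μ₁ : Measure (ℝ × ℝ) := (ProbabilityTheory.gaussianReal 0 1).prod volume
    let μ₂ : Measure (ℝ × ℝ) := (ProbabilityTheory.gaussianReal 0 1).prod
      (volume.withDensity fun y => ENNReal.ofReal |y|)
    let K : Set (ℝ × ℝ) := Set.Icc (-M) M ×ˢ Set.Icc (-M) M
    -- `A y = λ₁^{1/2} y₁ v₁ + y₂ v₂` and `A_∞ y = ν^{1/2} y₁ w₁ + y₂ w₂`
    let integrand : ℝ × ℝ → ℝ := fun y =>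
      Real.exp (-c₂ * enorm2 ((Real.sqrt lam1 * y.1) • v1 + y.2 • v2 + m1 • v1)) +
      Real.exp (-c₂ * enorm2 ((Real.sqrt ν * y.1) • w1 + y.2 • w2))
    (∫ y in Kᶜ, integrand y ∂μ₁) ≤
        4 * (c * Real.exp (-M / c) * (M + 1) + c * Real.exp (-M ^ 2 / 2)) ∧
      (∫ y in Kᶜ, integrand y ∂μ₂) ≤
        4 * (c * Real.exp (-M / c) * (M + 1) + c * Real.exp (-M ^ 2 / 2)) :=
  stmt_12_general lam1 ν m1 c₂ hc₂ v1 v2 hv M hM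
end

section
/- For every x ∈ ℝ, ∫_ℝ ( 4 sech³((x + y)/√2) − 6 sech⁵((x + y)/√2) ) · sech((y − x)/√2) dy < 0. -/
open MeasureTheory

/-- Hyperbolic secant. -/
noncomputable def sech (x : ℝ) : ℝ := 1 / Real.cosh x

/-!
Substituting `t = (x + y) / √2` turns the integral into `√2 ∫ (4 sech³ t - 6 sech⁵ t) sech (t - c) dt`
with `c = √2 x`. Since `(sech³)'' - sech³ = 2 (4 sech³ - 6 sech⁵)` and `sech'' - sech = -2 sech³`,
the Wronskian `W` of `sech³` and `sech (· - c)` satisfies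
`W' = 2 ((4 sech³ t - 6 sech⁵ t) sech (t - c) + sech³ t sech³ (t - c))`.
As `W` is integrable, `∫ W' = 0`, so the integral equals `-∫ sech³ t sech³ (t - c) dt < 0`.
-/

open Real

lemma sech_pos (t : ℝ) : 0 < sech t := one_div_pos.2 (cosh_pos t)

lemma sech_le_one (t : ℝ) : sech t ≤ 1 := div_le_one_of_le₀ (one_le_cosh t) (cosh_pos t).le

lemma sech_pow_le_sech {n : ℕ} (hn : n ≠ 0) (t : ℝ) : sech t ^ n ≤ sech t :=
  pow_le_of_le_one (sech_pos t).le (sech_le_one t) hn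

lemma tanh_sq_add_sech_sq (t : ℝ) : tanh t ^ 2 + sech t ^ 2 = 1 := by
  have := cosh_pos t
  rw [tanh_eq_sinh_div_cosh, sech]
  field_simp
  linarith [cosh_sq t]

@[fun_prop]
lemma continuous_sech : Continuous sech :=
  continuous_const.div continuous_cosh fun t => (cosh_pos t).ne'

lemma sech_le_four_mul_inv_one_add_sq (t : ℝ) : sech t ≤ 4 * (1 + t ^ 2)⁻¹ := by
  have hexp : exp |t| ≤ 2 * cosh t := by rw [cosh_eq]; linarith [exp_abs_le t]
  have hquad := quadratic_le_exp_of_nonneg (abs_nonneg t)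
  have hcosh : (1 + t ^ 2) / 4 ≤ cosh t := by nlinarith [sq_abs t, abs_nonneg t]
  calc sech t ≤ 1 / ((1 + t ^ 2) / 4) := one_div_le_one_div_of_le (by positivity) hcosh
    _ = 4 * (1 + t ^ 2)⁻¹ := by rw [one_div_div, div_eq_mul_inv]

lemma integrable_sech : Integrable sech :=
  (integrable_inv_one_add_sq.const_mul 4).mono' continuous_sech.aestronglyMeasurable
    (ae_of_all _ fun t => by
      rw [norm_of_nonneg (sech_pos t).le]; exact sech_le_four_mul_inv_one_add_sq t)

lemma integrable_of_abs_le_mul_sech {g : ℝ → ℝ} {C : ℝ} (hg : Continuous g)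
    (hbound : ∀ t, |g t| ≤ C * sech t) : Integrable g :=
  (integrable_sech.const_mul C).mono' hg.aestronglyMeasurable (ae_of_all _ hbound)

lemma hasDerivAt_tanh (t : ℝ) : HasDerivAt tanh (sech t ^ 2) t := by
  have h : HasDerivAt (fun t => sinh t / cosh t) _ t :=
    (hasDerivAt_sinh t).div (hasDerivAt_cosh t) (cosh_pos t).ne'
  rw [show tanh = fun t => sinh t / cosh t from funext tanh_eq_sinh_div_cosh]
  refine h.congr_deriv ?_
  rw [sech, div_pow, one_pow]
  congr 1
  linear_combination cosh_sq t

lemma hasDerivAt_sech (t : ℝ) : HasDerivAt sech (-(sech t * tanh t)) t := by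
  have h : HasDerivAt (fun t => (cosh t)⁻¹) (-sinh t / cosh t ^ 2) t :=
    (hasDerivAt_cosh t).inv (cosh_pos t).ne'
  refine (h.congr_of_eventuallyEq (.of_eq (funext fun t => one_div (cosh t)))).congr_deriv ?_
  rw [sech, tanh_eq_sinh_div_cosh]
  field_simp

lemma hasDerivAt_sech_pow (n : ℕ) (t : ℝ) :
    HasDerivAt (fun t => sech t ^ n) (-(n * (sech t ^ n * tanh t))) t := by
  refine ((hasDerivAt_sech t).fun_pow n).congr_deriv ?_
  rcases n with _ | n
  · simp
  · simp only [Nat.cast_add, Nat.cast_one, add_tsub_cancel_right, pow_succ]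
    ring

lemma hasDerivAt_sech_pow_mul_tanh (n : ℕ) (t : ℝ) :
    HasDerivAt (fun t => sech t ^ n * tanh t) ((n + 1) * sech t ^ (n + 2) - n * sech t ^ n) t := by
  refine ((hasDerivAt_sech_pow n t).mul (hasDerivAt_tanh t)).congr_deriv ?_
  linear_combination (-(n : ℝ) * sech t ^ n) * tanh_sq_add_sech_sq t

lemma hasDerivAt_deriv_sech_pow (n : ℕ) (t : ℝ) :
    HasDerivAt (fun t => -(n * (sech t ^ n * tanh t)))
      (n ^ 2 * sech t ^ n - n * (n + 1) * sech t ^ (n + 2)) t :=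
  ((hasDerivAt_sech_pow_mul_tanh n t).const_mul _).neg.congr_deriv (by ring)

lemma HasDerivAt.wronskian {f f' g g' : ℝ → ℝ} {f'' g'' t : ℝ}
    (hf : HasDerivAt f (f' t) t) (hf' : HasDerivAt f' f'' t)
    (hg : HasDerivAt g (g' t) t) (hg' : HasDerivAt g' g'' t) :
    HasDerivAt (fun s => f' s * g s - f s * g' s) (f'' * g t - f t * g'') t :=
  ((hf'.mul hg).sub (hf.mul hg')).congr_deriv (by ring)

lemma integrable_sech_pow_mul_sech_sub_pow {n : ℕ} (hn : n ≠ 0) (m : ℕ) (c : ℝ) :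
    Integrable fun t => sech t ^ n * sech (t - c) ^ m := by
  refine integrable_of_abs_le_mul_sech (C := 1) (by fun_prop) fun t => ?_
  have := sech_pow_le_sech hn t
  have := pow_le_one₀ (sech_pos (t - c)).le (sech_le_one (t - c)) (n := m)
  have := sech_pos t
  have := sech_pos (t - c)
  calc |sech t ^ n * sech (t - c) ^ m| = sech t ^ n * sech (t - c) ^ m := abs_of_pos (by positivity)
    _ ≤ sech t * 1 := by gcongr
    _ = 1 * sech t := by ring

lemma hasDerivAt_sech_cube_wronskian (c t : ℝ) :
    HasDerivAt (fun t => sech t ^ 3 * sech (t - c) * (tanh (t - c) - 3 * tanh t))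
      (2 * ((4 * sech t ^ 3 - 6 * sech t ^ 5) * sech (t - c) + sech t ^ 3 * sech (t - c) ^ 3)) t := by
  have h := HasDerivAt.wronskian (hasDerivAt_sech_pow 3 t) (hasDerivAt_deriv_sech_pow 3 t)
    ((hasDerivAt_sech_pow 1 (t - c)).comp_sub_const t c)
    ((hasDerivAt_deriv_sech_pow 1 (t - c)).comp_sub_const t c)
  refine (h.congr_of_eventuallyEq (.of_eq (funext fun t => ?_))).congr_deriv ?_
  all_goals push_cast; ring

lemma integrable_sech_cube_wronskian (c : ℝ) :
    Integrable fun t => sech t ^ 3 * sech (t - c) * (tanh (t - c) - 3 * tanh t) := by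
  refine integrable_of_abs_le_mul_sech (C := 4)
    (continuous_iff_continuousAt.2 fun t => (hasDerivAt_sech_cube_wronskian c t).continuousAt)
    fun t => ?_
  have := sech_pow_le_sech three_ne_zero t
  have := sech_le_one (t - c)
  have := sech_pos t
  have := sech_pos (t - c)
  have htanh : |tanh (t - c) - 3 * tanh t| ≤ 4 := by
    rw [abs_le]
    constructor <;> linarith [abs_lt.1 (abs_tanh_lt_one t), abs_lt.1 (abs_tanh_lt_one (t - c))]
  calc |sech t ^ 3 * sech (t - c) * (tanh (t - c) - 3 * tanh t)|
      = sech t ^ 3 * sech (t - c) * |tanh (t - c) - 3 * tanh t| := by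
        rw [abs_mul, abs_of_pos (by positivity)]
    _ ≤ sech t * 1 * 4 := by gcongr
    _ = 4 * sech t := by ring

theorem integral_sech_poly_mul_sech_sub (c : ℝ) :
    ∫ t, (4 * sech t ^ 3 - 6 * sech t ^ 5) * sech (t - c) =
      -∫ t, sech t ^ 3 * sech (t - c) ^ 3 := by
  have hP := integrable_sech_pow_mul_sech_sub_pow three_ne_zero 3 c
  have hΦ : Integrable fun t => (4 * sech t ^ 3 - 6 * sech t ^ 5) * sech (t - c) :=
    (((integrable_sech_pow_mul_sech_sub_pow three_ne_zero 1 c).const_mul 4).sub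
      ((integrable_sech_pow_mul_sech_sub_pow (by norm_num : 5 ≠ 0) 1 c).const_mul 6)).congr
      (ae_of_all _ fun t => by simp only [Pi.sub_apply]; ring)
  have h := integral_eq_zero_of_hasDerivAt_of_integrable (hasDerivAt_sech_cube_wronskian c)
    ((hΦ.add hP).const_mul 2) (integrable_sech_cube_wronskian c)
  rw [integral_const_mul, integral_add hΦ hP] at h
  linarith

theorem integral_sech_pow_mul_sech_sub_pow_pos {n : ℕ} (hn : n ≠ 0) (m : ℕ) (c : ℝ) :
    0 < ∫ t, sech t ^ n * sech (t - c) ^ m :=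
  integral_pos_of_integrable_nonneg_nonzero (x := 0) (by fun_prop)
    (integrable_sech_pow_mul_sech_sub_pow hn m c)
    (fun t => by have := sech_pos t; have := sech_pos (t - c); positivity)
    (by have := sech_pos 0; have := sech_pos (0 - c); positivity)

theorem integral_comp_add_div {E : Type*} [NormedAddCommGroup E] [NormedSpace ℝ E] (f : ℝ → E)
    (x a : ℝ) : ∫ y, f ((x + y) / a) = |a| • ∫ t, f t := by
  rw [integral_add_left_eq_self (fun z => f (z / a)) x, Measure.integral_comp_div]

theorem stmt_15 (x : ℝ) :
    (∫ y, (4 * sech ((x + y) / Real.sqrt 2) ^ 3 - 6 * sech ((x + y) / Real.sqrt 2) ^ 5) *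
        sech ((y - x) / Real.sqrt 2)) < 0 := by
  have hshift : ∀ y, (y - x) / √2 = (x + y) / √2 - √2 * x := fun y => by
    field_simp
    linear_combination x * sq_sqrt (zero_le_two : (0 : ℝ) ≤ 2)
  simp_rw [hshift]
  rw [integral_comp_add_div (fun t => (4 * sech t ^ 3 - 6 * sech t ^ 5) * sech (t - √2 * x)),
    integral_sech_poly_mul_sech_sub, smul_eq_mul]
  exact mul_neg_of_pos_of_neg (by positivity)
    (neg_neg_of_pos (integral_sech_pow_mul_sech_sub_pow_pos three_ne_zero 3 _))
end

section
/- For every x > 0, −3 sinh(4x) + 4x cosh(4x) + 8x > 0. -/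
/-! With `N x = -3 sinh x + x cosh x + 2 x`, the function `N` and its first two derivatives
vanish at `0`, while `N''' x = x sinh x > 0` for `x > 0`. Hence `N''`, then `N'`, then `N`
are positive on `(0, ∞)`, and the theorem is `N (4 x) > 0`. -/

open Real

lemma pos_of_hasDerivAt_of_map_zero {f f' : ℝ → ℝ} (hf : ∀ y, HasDerivAt f (f' y) y)
    (h0 : f 0 = 0) (hf' : ∀ y, 0 < y → 0 < f' y) {x : ℝ} (hx : 0 < x) : 0 < f x := by
  have hmono : StrictMonoOn f (Set.Ici 0) :=
    strictMonoOn_of_hasDerivWithinAt_pos (convex_Ici 0)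
      (fun y _ => (hf y).continuousAt.continuousWithinAt)
      (fun y _ => (hf y).hasDerivWithinAt)
      (fun y hy => hf' y (by rwa [interior_Ici] at hy))
  simpa [h0] using hmono Set.self_mem_Ici hx.le hx

lemma sinh_lt_mul_cosh {x : ℝ} (hx : 0 < x) : sinh x < x * cosh x := by
  have hderiv (y : ℝ) : HasDerivAt (fun y => y * cosh y - sinh y) (y * sinh y) y :=
    (((hasDerivAt_id' y).mul (hasDerivAt_cosh y)).sub (hasDerivAt_sinh y)).congr_deriv (by ring)
  have := pos_of_hasDerivAt_of_map_zero hderiv (by simp)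
    (fun y hy => mul_pos hy (sinh_pos_iff.2 hy)) hx
  linarith

lemma two_mul_cosh_lt_mul_sinh_add_two {x : ℝ} (hx : 0 < x) :
    2 * cosh x < x * sinh x + 2 := by
  have hderiv (y : ℝ) :
      HasDerivAt (fun y => y * sinh y + 2 - 2 * cosh y) (y * cosh y - sinh y) y :=
    ((((hasDerivAt_id' y).mul (hasDerivAt_sinh y)).add_const 2).sub
      ((hasDerivAt_cosh y).const_mul 2)).congr_deriv (by ring)
  have := pos_of_hasDerivAt_of_map_zero hderiv (by simp)
    (fun y hy => sub_pos.2 (sinh_lt_mul_cosh hy)) hx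
  linarith

lemma three_mul_sinh_lt_mul_cosh_add_two_mul {x : ℝ} (hx : 0 < x) :
    3 * sinh x < x * cosh x + 2 * x := by
  have hderiv (y : ℝ) : HasDerivAt (fun y => -3 * sinh y + y * cosh y + 2 * y)
      (y * sinh y + 2 - 2 * cosh y) y :=
    ((((hasDerivAt_sinh y).const_mul (-3)).add ((hasDerivAt_id' y).mul (hasDerivAt_cosh y))).add
      ((hasDerivAt_id' y).const_mul 2)).congr_deriv (by ring)
  have := pos_of_hasDerivAt_of_map_zero hderiv (by simp)
    (fun y hy => sub_pos.2 (two_mul_cosh_lt_mul_sinh_add_two hy)) hx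
  linarith

theorem stmt_17 (x : ℝ) (hx : 0 < x) :
    0 < -3 * Real.sinh (4 * x) + 4 * x * Real.cosh (4 * x) + 8 * x := by
  have := three_mul_sinh_lt_mul_cosh_add_two_mul (by positivity : 0 < 4 * x)
  linarith
end

section
/- Let a ≥ 1, let ṽ₁ = ( (−(a−1) − √((a−1)² + 4))/2 , 1 ) — an eigenvector of the matrix [[1,1],[1,a]] for its smaller eigenvalue — and let v₁ = ṽ₁/‖ṽ₁‖₂ be its normalization. Let w₂ = (1,1)/√2. Then |⟨w₂, v₁⟩| ≤ (1/√2) · ((a−1)/2) · (1 + (1/2)·((a−1)/2)). -/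
/-! The smaller eigenvalue of `[[1,1],[1,a]]` has eigenvector `(-c, 1)` with
`c = b + √(b² + 1)`, `b = (a - 1)/2`, so `⟨w₂, v₁⟩` is `(1 - c)/√2` scaled by `‖ṽ₁‖⁻¹ ≤ 1`.
The tangent-line bound `√(b² + 1) ≤ 1 + b²/2` gives `c - 1 ≤ b (1 + b/2)`. -/

theorem abs_snd_le_enorm2 (p : ℝ × ℝ) : |p.2| ≤ enorm2 p :=
  Real.abs_le_sqrt (le_add_of_nonneg_left (sq_nonneg p.1))

theorem dot_diag_smul (t r : ℝ) (p : ℝ × ℝ) : dot (t, t) (r • p) = t * r * (p.1 + p.2) := by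
  simp only [dot, Prod.smul_fst, Prod.smul_snd, smul_eq_mul]
  ring

theorem abs_dot_diag_normalize_le (t : ℝ) {p : ℝ × ℝ} (hp : 1 ≤ |p.2|) :
    |dot (t, t) ((enorm2 p)⁻¹ • p)| ≤ |t| * |p.1 + p.2| := by
  have hnorm : 1 ≤ enorm2 p := hp.trans (abs_snd_le_enorm2 p)
  have hinv : |(enorm2 p)⁻¹| ≤ 1 := by
    rw [abs_of_pos (inv_pos.mpr (one_pos.trans_le hnorm))]
    exact inv_le_one_of_one_le₀ hnorm
  rw [dot_diag_smul, abs_mul, abs_mul]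
  exact mul_le_mul_of_nonneg_right (mul_le_of_le_one_right (abs_nonneg t) hinv) (abs_nonneg _)

theorem sqrt_sq_add_sq_le (x : ℝ) {y : ℝ} (hy : 0 < y) :
    Real.sqrt (x ^ 2 + y ^ 2) ≤ y + x ^ 2 / (2 * y) := by
  have hsq : (y + x ^ 2 / (2 * y)) ^ 2 = x ^ 2 + y ^ 2 + (x ^ 2 / (2 * y)) ^ 2 := by
    field_simp
    ring
  rw [Real.sqrt_le_iff, hsq]
  exact ⟨by positivity, le_add_of_nonneg_right (sq_nonneg _)⟩

theorem abs_smallEigvec_fst_add_one_le {x : ℝ} (hx : 0 ≤ x) :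
    |(-x - Real.sqrt (x ^ 2 + 4)) / 2 + 1| ≤ x / 2 * (1 + 1 / 2 * (x / 2)) := by
  have hlower : 2 ≤ Real.sqrt (x ^ 2 + 4) :=
    Real.le_sqrt_of_sq_le (by linarith [sq_nonneg x])
  have hupper : Real.sqrt (x ^ 2 + 4) ≤ 2 + x ^ 2 / 4 := by
    simpa [show (2 : ℝ) ^ 2 = 4 by norm_num, show (2 : ℝ) * 2 = 4 by norm_num] using
      sqrt_sq_add_sq_le x (y := 2) two_pos
  rw [abs_of_nonpos (by linarith)]
  linarith

theorem stmt_19 (a : ℝ) (ha : 1 ≤ a) :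
    let vt : ℝ × ℝ := ((-(a - 1) - Real.sqrt ((a - 1) ^ 2 + 4)) / 2, 1)
    let v1 := (enorm2 vt)⁻¹ • vt
    let w2 : ℝ × ℝ := (1 / Real.sqrt 2, 1 / Real.sqrt 2)
    |dot w2 v1| ≤ 1 / Real.sqrt 2 * ((a - 1) / 2) * (1 + 1 / 2 * ((a - 1) / 2)) := by
  intro vt v1 w2
  have hw : |1 / Real.sqrt 2| = 1 / Real.sqrt 2 := abs_of_pos (by positivity)
  calc |dot w2 v1| ≤ |1 / Real.sqrt 2| * |vt.1 + vt.2| :=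
        abs_dot_diag_normalize_le _ (by simp [vt])
    _ ≤ 1 / Real.sqrt 2 * ((a - 1) / 2 * (1 + 1 / 2 * ((a - 1) / 2))) := by
        rw [hw]
        gcongr
        exact abs_smallEigvec_fst_add_one_le (sub_nonneg.mpr ha)
    _ = _ := by ring
end
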